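/- Let C be a finite non-degenerate projective configuration with lines l₀,…,lₙ and H = ℤⁿ with basis x₁,…,xₙ. The elements r̄(i,p) = xᵢ ∧ s_p of Λ²H, taken over all pairs (i,p) ∈ 𝒜 with i ≠ min{j : lⱼ incident to p}, are linearly independent over ℤ. -/
import Mathlib


open scoped Classical

namespace Rybnikov12

/- A finite non-degenerate projective configuration with lines `l₀, …, lₙ`
(indexed by `Fin (n+1)`) and points of type `P`, incidence `inc`.
`H = ℤⁿ` with basis `x₁, …, xₙ` (`xv i = Pi.single i 1` for `i : Fin n`,
corresponding to the line `l_{i.succ}`).  We use the standard model of `Λ²H`: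
functions on `{(i,j) | i < j}`, with `(u ∧ v)(i,j) = uᵢvⱼ − uⱼvᵢ`. -/

variable {n : ℕ} {P : Type*}

/-- The model of `Λ²H` for `H = ℤⁿ`. -/
abbrev Lam (n : ℕ) := {q : Fin n × Fin n // q.1 < q.2} → ℤ

/-- The wedge product `H × H → Λ²H`. -/
def wedge (u v : Fin n → ℤ) : Lam n :=
  fun q => u q.val.1 * v q.val.2 - u q.val.2 * v q.val.1

/-- The basis vector `xᵢ` of `H = ℤⁿ`. -/
def xv (i : Fin n) : Fin n → ℤ := Pi.single i 1

/-- `s_p ∈ H`, the sum of the `x_j` over the lines `l_j` through `p` (`1 ≤ j ≤ n`). -/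
noncomputable def sv (inc : Fin (n + 1) → P → Prop) (p : P) : Fin n → ℤ :=
  fun k => if inc k.succ p then 1 else 0

/-- The index set: pairs `(i,p) ∈ 𝒜` (so `p ∈ 𝒫₀` and `l_{i.succ}` passes through `p`)
such that `i` is not the minimal index of a line through `p`. -/
def Idx (inc : Fin (n + 1) → P → Prop) : Type _ :=
  {z : Fin n × P // ¬ inc 0 z.2 ∧ inc z.1.succ z.2 ∧ ∃ j : Fin n, j < z.1 ∧ inc j.succ z.2}

/-- The elements `r̄(i,p) = xᵢ ∧ s_p ∈ Λ²H`, for `(i,p) ∈ 𝒜` with `i` non-minimal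
among the lines through `p`, are linearly independent over `ℤ`. -/
theorem rbar_linearIndependent
    [Fintype P] (inc : Fin (n + 1) → P → Prop)
    (unique_meet : ∀ i j : Fin (n + 1), i ≠ j → ∃! p : P, inc i p ∧ inc j p)
    (point_on_two : ∀ p : P, ∃ i j : Fin (n + 1), i ≠ j ∧ inc i p ∧ inc j p)
    (nondeg : ∃ p q : P, p ≠ q) :
    LinearIndependent ℤ (fun z : Idx inc => wedge (xv z.val.1) (sv inc z.val.2)) := by
  classical
  haveI : Fintype (Idx inc) := by unfold Idx; infer_instance
  rw [Fintype.linearIndependent_iff]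
  intro g hg z
  obtain ⟨⟨i, p⟩, h0, hip, j, hji, hjp⟩ := z
  set z : Idx inc := ⟨(i, p), h0, hip, j, hji, hjp⟩ with hzdef
  -- minimal line through p
  set s : Finset (Fin n) := Finset.univ.filter (fun k => inc k.succ p) with hs
  have hsne : s.Nonempty := ⟨i, by simp [hs, hip]⟩
  set m : Fin n := s.min' hsne with hmdef
  have hmp : inc m.succ p := by
    have := s.min'_mem hsne
    simpa [hs] using this
  have hmle : ∀ k : Fin n, inc k.succ p → m ≤ k := fun k hk =>
    s.min'_le k (by simp [hs, hk])
  have hmi : m < i := lt_of_le_of_lt (hmle j hjp) hji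
  set q : {q : Fin n × Fin n // q.1 < q.2} := ⟨(m, i), hmi⟩ with hq
  have hgq := congrFun hg q
  simp only [Finset.sum_apply, Pi.smul_apply, smul_eq_mul, Pi.zero_apply] at hgq
  -- auxiliary: two lines determine their point
  have meet_eq : ∀ (a b : Fin n) (p' p'' : P), a ≠ b →
      inc a.succ p' → inc b.succ p' → inc a.succ p'' → inc b.succ p'' → p' = p'' := by
    intro a b p' p'' hab h1 h2 h3 h4
    have hne : a.succ ≠ b.succ := fun h => hab (Fin.succ_injective _ h)
    obtain ⟨q0, _, hq0⟩ := unique_meet a.succ b.succ hne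
    rw [hq0 p' ⟨h1, h2⟩, hq0 p'' ⟨h3, h4⟩]
  have hzero : ∀ w : Idx inc, w ∈ Finset.univ → w ≠ z →
      g w * wedge (xv w.val.1) (sv inc w.val.2) q = 0 := by
    rintro ⟨⟨i', p'⟩, h0', hip', j', hji', hjp'⟩ - hwz
    suffices h : wedge (xv i') (sv inc p') q = 0 by
      simp [h]
    simp only [wedge, hq]
    by_cases hii : i' = i
    · subst hii
      have hpp : p' ≠ p := by
        intro h; subst h; exact hwz rfl
      have hnp : ¬ inc m.succ p' := fun h =>
        hpp (meet_eq m i' p' p (ne_of_lt hmi) h hip' hmp hip)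
      simp [xv, sv, Pi.single_eq_of_ne (ne_of_lt hmi), hnp]
    · by_cases him : i' = m
      · subst him
        have hpp : p' ≠ p := by
          intro h; subst h
          exact absurd hji' (not_lt.2 (hmle j' hjp'))
        have hnp : ¬ inc i.succ p' := fun h =>
          hpp (meet_eq m i p' p (ne_of_lt hmi) hip' h hmp hip)
        simp [xv, sv, Pi.single_eq_of_ne (Ne.symm hii), hnp]
      · simp [xv, Pi.single_eq_of_ne (Ne.symm him), Pi.single_eq_of_ne (Ne.symm hii)]
  rw [Finset.sum_eq_single_of_mem z (Finset.mem_univ z) hzero] at hgq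
  have hval : wedge (xv i) (sv inc p) q = -1 := by
    simp [wedge, hq, xv, sv, Pi.single_eq_of_ne (ne_of_lt hmi), hmp, hip]
  rw [hval] at hgq
  omega


end Rybnikov12
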